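/- arXiv:cs/9909005 — 2 statements merged into one kernel-verified Lean document; each statement's English description precedes it below -/
import Mathlib

section
/- Let S be a finite nonempty subset of ℝ² and let s₁ ≠ s₂ be two points of ℝ² with s₁ ∉ S and s₂ ∉ S. Then there are at most two points x ∈ ℝ² such that dist(x,s₁) = dist(x,s₂) = f_S(x). Equivalently, the curve of the space of circles consisting of the circles passing through both s₁ and s₂ (the hyperbola branch LC(s₁) ∩ LC(s₂)) intersects the upper envelope UE(S) in at most two points. -/
set_option maxHeartbeats 1000000


noncomputable section

/-- The Euclidean plane. -/
abbrev Plane := EuclideanSpace ℝ (Fin 2)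

private lemma dist_sq' (x y : Plane) :
    dist x y ^ 2 = (x 0 - y 0)^2 + (x 1 - y 1)^2 := by
  rw [EuclideanSpace.dist_eq, Real.sq_sqrt (by positivity)]
  simp [Fin.sum_univ_two, Real.dist_eq, sq_abs]

private lemma plane_ext' {x y : Plane} (h0 : x 0 = y 0) (h1 : x 1 = y 1) : x = y := by
  ext i; fin_cases i <;> assumption

private lemma plane_ne' {x y : Plane} (h : x ≠ y) : ¬(x 0 = y 0 ∧ x 1 = y 1) :=
  fun ⟨h0, h1⟩ => h (plane_ext' h0 h1)

private lemma eq_of_sq_eq' {a b : ℝ} (ha : 0 ≤ a) (hb : 0 ≤ b) (h : a ^ 2 = b ^ 2) :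
    a = b := by
  have h2 : (a - b) * (a + b) = 0 := by linear_combination h
  rcases mul_eq_zero.mp h2 with h3 | h3 <;> nlinarith

private lemma cross_zero' {w0 w1 a0 a1 b0 b1 : ℝ} (hw : ¬(w0 = 0 ∧ w1 = 0))
    (h1 : w0 * a0 + w1 * a1 = 0) (h2 : w0 * b0 + w1 * b1 = 0) :
    a0 * b1 = a1 * b0 := by
  have e0 : w0 * (a0 * b1 - a1 * b0) = 0 := by linear_combination b1 * h1 - a1 * h2
  have e1 : w1 * (a0 * b1 - a1 * b0) = 0 := by linear_combination a0 * h2 - b0 * h1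
  by_cases hw0 : w0 = 0
  · have hw1 : w1 ≠ 0 := fun h => hw ⟨hw0, h⟩
    have := (mul_eq_zero.mp e1).resolve_left hw1
    linarith
  · have := (mul_eq_zero.mp e0).resolve_left hw0
    linarith

private lemma exists_scale' {a0 a1 b0 b1 : ℝ} (ha : ¬(a0 = 0 ∧ a1 = 0))
    (hcross : a0 * b1 = a1 * b0) : ∃ c : ℝ, b0 = c * a0 ∧ b1 = c * a1 := by
  by_cases h0 : a0 = 0
  · have h1 : a1 ≠ 0 := fun h => ha ⟨h0, h⟩
    refine ⟨b1 / a1, ?_, by field_simp⟩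
    have : a1 * b0 = 0 := by rw [← hcross, h0]; ring
    have hb0 : b0 = 0 := by
      rcases mul_eq_zero.mp this with h | h
      · exact absurd h h1
      · exact h
    rw [hb0, h0]; ring
  · refine ⟨b0 / a0, by field_simp, ?_⟩
    field_simp
    linear_combination hcross

/-- Step B: if two distinct points are both equidistant from `s₁`, `s₂` and `p`,
then `p = s₁` or `p = s₂`. -/
private lemma stepB (x1 x3 s₁ s₂ p : Plane) (hne : s₁ ≠ s₂) (h13 : x1 ≠ x3)
    (e1 : dist x1 s₁ = dist x1 s₂) (e2 : dist x1 s₁ = dist x1 p)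
    (e3 : dist x3 s₁ = dist x3 s₂) (e4 : dist x3 s₁ = dist x3 p) :
    p = s₁ ∨ p = s₂ := by
  have q1 : (x1 0 - s₁ 0)^2 + (x1 1 - s₁ 1)^2 = (x1 0 - s₂ 0)^2 + (x1 1 - s₂ 1)^2 := by
    rw [← dist_sq', ← dist_sq', e1]
  have q2 : (x1 0 - s₁ 0)^2 + (x1 1 - s₁ 1)^2 = (x1 0 - p 0)^2 + (x1 1 - p 1)^2 := by
    rw [← dist_sq', ← dist_sq', e2]
  have q3 : (x3 0 - s₁ 0)^2 + (x3 1 - s₁ 1)^2 = (x3 0 - s₂ 0)^2 + (x3 1 - s₂ 1)^2 := by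
    rw [← dist_sq', ← dist_sq', e3]
  have q4 : (x3 0 - s₁ 0)^2 + (x3 1 - s₁ 1)^2 = (x3 0 - p 0)^2 + (x3 1 - p 1)^2 := by
    rw [← dist_sq', ← dist_sq', e4]
  have hw : ¬(x1 0 - x3 0 = 0 ∧ x1 1 - x3 1 = 0) := by
    rintro ⟨h0, h1⟩
    exact plane_ne' h13 ⟨by linarith, by linarith⟩
  have ha : ¬(s₂ 0 - s₁ 0 = 0 ∧ s₂ 1 - s₁ 1 = 0) := by
    rintro ⟨h0, h1⟩
    exact plane_ne' hne ⟨by linarith, by linarith⟩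
  have o1 : (x1 0 - x3 0) * (s₂ 0 - s₁ 0) + (x1 1 - x3 1) * (s₂ 1 - s₁ 1) = 0 := by
    linear_combination (q1 - q3) / 2
  have o2 : (x1 0 - x3 0) * (p 0 - s₁ 0) + (x1 1 - x3 1) * (p 1 - s₁ 1) = 0 := by
    linear_combination (q2 - q4) / 2
  have hcross : (s₂ 0 - s₁ 0) * (p 1 - s₁ 1) = (s₂ 1 - s₁ 1) * (p 0 - s₁ 0) :=
    cross_zero' hw o1 o2
  obtain ⟨c, hc0, hc1⟩ := exists_scale' ha hcross
  have hp0 : p 0 = s₁ 0 + c * (s₂ 0 - s₁ 0) := by linarith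
  have hp1 : p 1 = s₁ 1 + c * (s₂ 1 - s₁ 1) := by linarith
  rw [hp0, hp1] at q2
  have hca : c * (c - 1) * ((s₂ 0 - s₁ 0)^2 + (s₂ 1 - s₁ 1)^2) = 0 := by
    linear_combination c * q1 - q2
  have hApos : 0 < (s₂ 0 - s₁ 0)^2 + (s₂ 1 - s₁ 1)^2 := by
    rcases not_and_or.mp ha with h | h
    · have : 0 < (s₂ 0 - s₁ 0)^2 := by positivity
      nlinarith [sq_nonneg (s₂ 1 - s₁ 1)]
    · have : 0 < (s₂ 1 - s₁ 1)^2 := by positivity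
      nlinarith [sq_nonneg (s₂ 0 - s₁ 0)]
  have : c * (c - 1) = 0 := by
    rcases mul_eq_zero.mp hca with h | h
    · exact h
    · exact absurd h hApos.ne'
  rcases mul_eq_zero.mp this with h | h
  · left
    exact plane_ext' (by rw [hp0, h]; ring) (by rw [hp1, h]; ring)
  · right
    have hc : c = 1 := by linarith
    exact plane_ext' (by rw [hp0, hc]; ring) (by rw [hp1, hc]; ring)

/-- Step A: no solution can lie strictly between two other solutions. -/
private lemma middle_case (S : Finset Plane) (hS : S.Nonempty) (s₁ s₂ : Plane)
    (hne : s₁ ≠ s₂) (h₁ : s₁ ∉ S) (h₂ : s₂ ∉ S)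
    (x1 x2 x3 : Plane) (θ : ℝ) (hθ0 : 0 < θ) (hθ1 : θ < 1)
    (hX0 : x2 0 = x1 0 + θ * (x3 0 - x1 0)) (hX1 : x2 1 = x1 1 + θ * (x3 1 - x1 1))
    (h13 : x1 ≠ x3)
    (H1 : dist x1 s₁ = S.sup' hS fun p => dist x1 p)
    (H1' : dist x1 s₂ = S.sup' hS fun p => dist x1 p)
    (H2 : dist x2 s₁ = S.sup' hS fun p => dist x2 p)
    (H3 : dist x3 s₁ = S.sup' hS fun p => dist x3 p)
    (H3' : dist x3 s₂ = S.sup' hS fun p => dist x3 p) : False := by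
  obtain ⟨p, hpS, hp⟩ := S.exists_mem_eq_sup' hS (fun q => dist x2 q)
  have hp1 : dist x1 p ≤ dist x1 s₁ := by rw [H1]; exact Finset.le_sup' _ hpS
  have hp3 : dist x3 p ≤ dist x3 s₁ := by rw [H3]; exact Finset.le_sup' _ hpS
  have hp2 : dist x2 s₁ = dist x2 p := by rw [H2, hp]
  have q2 : (x2 0 - s₁ 0)^2 + (x2 1 - s₁ 1)^2 = (x2 0 - p 0)^2 + (x2 1 - p 1)^2 := by
    rw [← dist_sq', ← dist_sq', hp2]
  have q1 : (x1 0 - p 0)^2 + (x1 1 - p 1)^2 ≤ (x1 0 - s₁ 0)^2 + (x1 1 - s₁ 1)^2 := by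
    rw [← dist_sq', ← dist_sq']; exact pow_le_pow_left₀ dist_nonneg hp1 2
  have q3 : (x3 0 - p 0)^2 + (x3 1 - p 1)^2 ≤ (x3 0 - s₁ 0)^2 + (x3 1 - s₁ 1)^2 := by
    rw [← dist_sq', ← dist_sq']; exact pow_le_pow_left₀ dist_nonneg hp3 2
  rw [hX0, hX1] at q2
  -- key affine identity: A(x₂) = (1-θ) A(x₁) + θ A(x₃)
  have key : (1 - θ) * (((x1 0 - s₁ 0)^2 + (x1 1 - s₁ 1)^2) -
        ((x1 0 - p 0)^2 + (x1 1 - p 1)^2)) +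
      θ * (((x3 0 - s₁ 0)^2 + (x3 1 - s₁ 1)^2) -
        ((x3 0 - p 0)^2 + (x3 1 - p 1)^2)) = 0 := by
    linear_combination q2
  have e1 : (x1 0 - s₁ 0)^2 + (x1 1 - s₁ 1)^2 = (x1 0 - p 0)^2 + (x1 1 - p 1)^2 := by
    nlinarith [key, q1, q3, hθ0, hθ1]
  have e3 : (x3 0 - s₁ 0)^2 + (x3 1 - s₁ 1)^2 = (x3 0 - p 0)^2 + (x3 1 - p 1)^2 := by
    nlinarith [key, q1, q3, hθ0, hθ1]
  have d1 : dist x1 s₁ = dist x1 p :=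
    eq_of_sq_eq' dist_nonneg dist_nonneg (by rw [dist_sq', dist_sq']; exact e1)
  have d3 : dist x3 s₁ = dist x3 p :=
    eq_of_sq_eq' dist_nonneg dist_nonneg (by rw [dist_sq', dist_sq']; exact e3)
  rcases stepB x1 x3 s₁ s₂ p hne h13 (H1.trans H1'.symm) d1 (H3.trans H3'.symm) d3 with h | h
  · exact h₁ (h ▸ hpS)
  · exact h₂ (h ▸ hpS)

/-- The hyperbola branch of circles passing through two distinct points `s₁, s₂ ∉ S`
meets the upper envelope `UE(S)` (the graph of `f_S(x) = max_{p ∈ S} dist x p`) in at most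
two points: there are at most two centers `x` with `dist x s₁ = dist x s₂ = f_S x`. -/
theorem hyperbola_meets_upper_envelope_at_most_twice
    (S : Finset Plane) (hS : S.Nonempty)
    (s₁ s₂ : Plane) (hne : s₁ ≠ s₂) (h₁ : s₁ ∉ S) (h₂ : s₂ ∉ S) :
    ∃ u w : Plane, ∀ x : Plane,
      dist x s₁ = S.sup' hS (fun p => dist x p) →
      dist x s₂ = S.sup' hS (fun p => dist x p) →
      x = u ∨ x = w := by
  classical
  by_cases hex : ∃ u : Plane, dist u s₁ = S.sup' hS (fun p => dist u p) ∧
      dist u s₂ = S.sup' hS (fun p => dist u p)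
  · obtain ⟨u, hu1, hu2⟩ := hex
    by_cases hex2 : ∃ w : Plane, (dist w s₁ = S.sup' hS (fun p => dist w p) ∧
        dist w s₂ = S.sup' hS (fun p => dist w p)) ∧ w ≠ u
    · obtain ⟨w, ⟨hw1, hw2⟩, hwu⟩ := hex2
      refine ⟨u, w, fun x hx1 hx2 => ?_⟩
      by_contra hcon
      push_neg at hcon
      obtain ⟨hxu, hxw⟩ := hcon
      -- all three points lie on the perpendicular bisector of s₁s₂
      have sqd : ∀ z : Plane, dist z s₁ = dist z s₂ →
          (z 0 - s₁ 0)^2 + (z 1 - s₁ 1)^2 = (z 0 - s₂ 0)^2 + (z 1 - s₂ 1)^2 := by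
        intro z hz
        rw [← dist_sq', ← dist_sq', hz]
      have squ := sqd u (hu1.trans hu2.symm)
      have sqw := sqd w (hw1.trans hw2.symm)
      have sqx := sqd x (hx1.trans hx2.symm)
      have ha : ¬(s₂ 0 - s₁ 0 = 0 ∧ s₂ 1 - s₁ 1 = 0) := by
        rintro ⟨g0, g1⟩
        exact plane_ne' hne ⟨by linarith, by linarith⟩
      have ow : (s₂ 0 - s₁ 0) * (w 0 - u 0) + (s₂ 1 - s₁ 1) * (w 1 - u 1) = 0 := by
        linear_combination (sqw - squ) / 2
      have ox : (s₂ 0 - s₁ 0) * (x 0 - u 0) + (s₂ 1 - s₁ 1) * (x 1 - u 1) = 0 := by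
        linear_combination (sqx - squ) / 2
      have hcross : (w 0 - u 0) * (x 1 - u 1) = (w 1 - u 1) * (x 0 - u 0) :=
        cross_zero' ha ow ox
      have hwune : ¬(w 0 - u 0 = 0 ∧ w 1 - u 1 = 0) := by
        rintro ⟨g0, g1⟩
        exact plane_ne' hwu ⟨by linarith, by linarith⟩
      obtain ⟨t, ht0, ht1⟩ := exists_scale' hwune hcross
      have htne0 : t ≠ 0 := by
        intro h
        rw [h] at ht0 ht1
        exact plane_ne' hxu ⟨by linarith, by linarith⟩
      have htne1 : t ≠ 1 := by
        intro h
        rw [h] at ht0 ht1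
        exact plane_ne' hxw ⟨by linarith, by linarith⟩
      rcases lt_or_ge t 0 with hneg | hnn
      · -- u is strictly between x and w, with parameter -t/(1-t)
        have h1t : (0:ℝ) < 1 - t := by linarith
        exact middle_case S hS s₁ s₂ hne h₁ h₂ x u w (-t / (1 - t))
          (div_pos (by linarith) h1t) (by rw [div_lt_one h1t]; linarith)
          (by field_simp; linear_combination -ht0)
          (by field_simp; linear_combination -ht1)
          hxw hx1 hx2 hu1 hw1 hw2
      · have hpos : 0 < t := lt_of_le_of_ne hnn (Ne.symm htne0)
        rcases lt_or_ge t 1 with hlt | hge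
        · -- x is strictly between u and w
          exact middle_case S hS s₁ s₂ hne h₁ h₂ u x w t hpos hlt
            (by linarith) (by linarith) hwu.symm hu1 hu2 hx1 hw1 hw2
        · have hgt : 1 < t := lt_of_le_of_ne hge (Ne.symm htne1)
          -- w is strictly between u and x
          exact middle_case S hS s₁ s₂ hne h₁ h₂ u w x (1 / t)
            (one_div_pos.mpr hpos) ((div_lt_one hpos).mpr hgt)
            (by field_simp; linear_combination -ht0)
            (by field_simp; linear_combination -ht1)
            hxu.symm hu1 hu2 hw1 hx1 hx2
    · push_neg at hex2
      refine ⟨u, u, fun x hx1 hx2 => Or.inl ?_⟩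
      exact hex2 x ⟨hx1, hx2⟩
  · push_neg at hex
    exact ⟨s₁, s₁, fun x hx1 hx2 => absurd hx2 (hex x hx1)⟩
end
end

section
/- Let S be a finite nonempty subset of ℝ². Let n₁, n₂ be unit vectors in ℝ² with n₁ ≠ n₂ and n₁ ≠ −n₂, let c₁, c₂ ∈ ℝ, and set lᵢ = {y ∈ ℝ² : ⟨y,nᵢ⟩ = cᵢ} and Hᵢ = {y ∈ ℝ² : ⟨y,nᵢ⟩ ≥ cᵢ}. Then there are at most two points x ∈ H₁ ∩ H₂ such that infDist(x,l₁) = infDist(x,l₂) = f_S(x). Equivalently, the line of the space of circles consisting of the circles tangent to both oriented lines l₁ and l₂ (on the specified sides) intersects the upper envelope UE(S) in at most two points. -/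
noncomputable section

lemma real_inner_self_pos' {x : Plane} (hx : x ≠ 0) : 0 < (inner ℝ x x : ℝ) :=
  lt_of_le_of_ne real_inner_self_nonneg
    (fun h => hx (inner_self_eq_zero.mp h.symm))

lemma infDist_hyperplane' (n : Plane) (hn : ‖n‖ = 1) (c : ℝ) (x : Plane)
    (hx : c ≤ (inner ℝ x n : ℝ)) :
    Metric.infDist x {y : Plane | (inner ℝ y n : ℝ) = c} = (inner ℝ x n : ℝ) - c := by
  set d : ℝ := (inner ℝ x n : ℝ) - c with hd
  have hd0 : 0 ≤ d := by linarith
  have hy : (x - d • n) ∈ {y : Plane | (inner ℝ y n : ℝ) = c} := by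
    have : (inner ℝ n n : ℝ) = 1 := by
      rw [real_inner_self_eq_norm_sq, hn]; norm_num
    simp only [Set.mem_setOf_eq, inner_sub_left, real_inner_smul_left, this, hd]
    ring
  apply le_antisymm
  · calc Metric.infDist x {y : Plane | (inner ℝ y n : ℝ) = c} ≤ dist x (x - d • n) :=
        Metric.infDist_le_dist_of_mem hy
      _ = d := by
        rw [dist_eq_norm]
        simp [norm_smul, hn, abs_of_nonneg hd0]
  · by_contra h
    push_neg at h
    rw [Metric.infDist_lt_iff ⟨_, hy⟩] at h
    obtain ⟨y, hyS, hlt⟩ := h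
    have h1 : d = (inner ℝ (x - y) n : ℝ) := by
      simp only [Set.mem_setOf_eq] at hyS
      rw [inner_sub_left, hyS, hd]
    have h2 : (inner ℝ (x - y) n : ℝ) ≤ ‖x - y‖ * ‖n‖ := real_inner_le_norm _ _
    rw [hn, mul_one, ← dist_eq_norm] at h2
    linarith [h1 ▸ h2]

lemma span_perp' (m : Plane) (hm : m ≠ 0) :
    ∃ v : Plane, v ≠ 0 ∧ (inner ℝ v m : ℝ) = 0 ∧
      ∀ y : Plane, (inner ℝ y m : ℝ) = 0 → ∃ t : ℝ, y = t • v := by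
  refine ⟨(WithLp.equiv 2 (Fin 2 → ℝ)).symm ![-(m 1), m 0], ?_, ?_, ?_⟩
  · intro h
    apply hm
    have h0 := congrArg (fun z : Plane => z 0) h
    have h1 := congrArg (fun z : Plane => z 1) h
    simp at h0 h1
    ext i
    fin_cases i <;> simp [h0, h1]
  · simp [PiLp.inner_apply, Fin.sum_univ_two]
    ring
  · intro y hy
    have hmn : m 0 ^ 2 + m 1 ^ 2 ≠ 0 := by
      intro h
      apply hm
      have h0 : m 0 = 0 := by nlinarith [sq_nonneg (m 0), sq_nonneg (m 1)]
      have h1 : m 1 = 0 := by nlinarith [sq_nonneg (m 0), sq_nonneg (m 1)]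
      ext i; fin_cases i <;> simp [h0, h1]
    rw [PiLp.inner_apply, Fin.sum_univ_two] at hy
    simp only [RCLike.inner_apply, conj_trivial] at hy
    refine ⟨(y 1 * m 0 - y 0 * m 1) / (m 0 ^ 2 + m 1 ^ 2), ?_⟩
    ext i
    fin_cases i
    · simp only [PiLp.smul_apply, smul_eq_mul, WithLp.equiv_symm_apply, PiLp.toLp_apply]
      simp
      field_simp
      linear_combination m 0 * hy
    · simp only [PiLp.smul_apply, smul_eq_mul, WithLp.equiv_symm_apply, PiLp.toLp_apply]
      simp
      field_simp
      linear_combination m 1 * hy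

/-- The line of the space of circles consisting of the circles tangent to two given
non-parallel oriented lines (on the specified sides) meets the upper envelope `UE(S)`
(the graph of `f_S(x) = max_{p ∈ S} dist x p`) in at most two points: at most two centers
`x ∈ H₁ ∩ H₂` satisfy `infDist x l₁ = infDist x l₂ = f_S x`. -/
theorem line_of_bitangent_circles_meets_upper_envelope_at_most_twice
    (S : Finset Plane) (hS : S.Nonempty)
    (n₁ n₂ : Plane) (hn₁ : ‖n₁‖ = 1) (hn₂ : ‖n₂‖ = 1)
    (hne : n₁ ≠ n₂) (hne' : n₁ ≠ -n₂) (c₁ c₂ : ℝ)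
    (l₁ l₂ H₁ H₂ : Set Plane)
    (hl₁ : l₁ = {y : Plane | (inner ℝ y n₁ : ℝ) = c₁})
    (hl₂ : l₂ = {y : Plane | (inner ℝ y n₂ : ℝ) = c₂})
    (hH₁ : H₁ = {y : Plane | c₁ ≤ (inner ℝ y n₁ : ℝ)})
    (hH₂ : H₂ = {y : Plane | c₂ ≤ (inner ℝ y n₂ : ℝ)}) :
    ∃ u w : Plane, ∀ x : Plane, x ∈ H₁ ∩ H₂ →
      Metric.infDist x l₁ = S.sup' hS (fun q => dist x q) →
      Metric.infDist x l₂ = S.sup' hS (fun q => dist x q) →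
      x = u ∨ x = w := by
  classical
  set f : Plane → ℝ := fun x => S.sup' hS (fun q => dist x q) with hf
  have hf_nonneg : ∀ x, 0 ≤ f x := by
    intro x
    obtain ⟨p, hp⟩ := hS
    exact le_trans dist_nonneg (Finset.le_sup' _ hp)
  -- inner product facts
  have hnn₁ : (inner ℝ n₁ n₁ : ℝ) = 1 := by
    rw [real_inner_self_eq_norm_sq, hn₁]; norm_num
  have hnn₂ : (inner ℝ n₂ n₂ : ℝ) = 1 := by
    rw [real_inner_self_eq_norm_sq, hn₂]; norm_num
  obtain ⟨k, hk⟩ : ∃ k : ℝ, k = (inner ℝ n₁ n₂ : ℝ) := ⟨_, rfl⟩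
  have hk21 : (inner ℝ n₂ n₁ : ℝ) = k := by rw [real_inner_comm, ← hk]
  have hk1 : k < 1 := by
    have h := real_inner_self_pos' (sub_ne_zero.mpr hne)
    rw [inner_sub_left, inner_sub_right, inner_sub_right, hnn₁, hnn₂, hk21, ← hk] at h
    linarith
  have hk2 : -1 < k := by
    have hne'' : n₁ + n₂ ≠ 0 := by
      intro h
      exact hne' (by rw [eq_neg_iff_add_eq_zero]; exact h)
    have h := real_inner_self_pos' hne''
    rw [inner_add_left, inner_add_right, inner_add_right, hnn₁, hnn₂, hk21, ← hk] at h
    linarith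
  have hD : (0:ℝ) < 1 - k^2 := by nlinarith
  -- intersection point q of the two lines
  obtain ⟨q, hq₁, hq₂⟩ : ∃ q : Plane, (inner ℝ q n₁ : ℝ) = c₁ ∧ (inner ℝ q n₂ : ℝ) = c₂ := by
    refine ⟨((c₁ - k*c₂)/(1 - k^2)) • n₁ + ((c₂ - k*c₁)/(1 - k^2)) • n₂, ?_, ?_⟩
    · rw [inner_add_left, real_inner_smul_left, real_inner_smul_left, hnn₁, hk21]
      field_simp
      ring
    · rw [inner_add_left, real_inner_smul_left, real_inner_smul_left, hnn₂, ← hk]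
      field_simp
      ring
  -- the direction v of the locus of equidistant centers
  have hm : n₁ - n₂ ≠ 0 := sub_ne_zero.mpr hne
  obtain ⟨v, hv0, hvm, hspan⟩ := span_perp' (n₁ - n₂) hm
  obtain ⟨s, hs⟩ : ∃ s : ℝ, s = (inner ℝ v n₁ : ℝ) := ⟨_, rfl⟩
  have hs₂ : (inner ℝ v n₂ : ℝ) = s := by
    rw [inner_sub_right] at hvm
    rw [hs]
    linarith
  -- strict Cauchy-Schwarz : s^2 < ‖v‖^2
  have hsv : s^2 < ‖v‖^2 := by
    have hvne : v - s • n₁ ≠ 0 := by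
      intro h
      have hveq : v = s • n₁ := by
        rw [sub_eq_zero] at h; exact h
      rw [hveq, real_inner_smul_left, inner_sub_right, hnn₁, ← hk] at hvm
      have hs0 : s = 0 := by
        rcases mul_eq_zero.mp hvm with h' | h'
        · exact h'
        · exact absurd h' (by intro hh; linarith)
      rw [hs0, zero_smul] at hveq
      exact hv0 hveq
    have h := real_inner_self_pos' hvne
    simp only [inner_sub_left, inner_sub_right, real_inner_smul_left,
      real_inner_smul_right] at h
    have e1 : (inner ℝ v v : ℝ) = ‖v‖^2 := real_inner_self_eq_norm_sq v
    have e2 : (inner ℝ n₁ v : ℝ) = s := by rw [real_inner_comm, ← hs]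
    rw [e1, e2, ← hs, hnn₁] at h
    nlinarith [h]
  -- characterization of solutions
  set Sol : ℝ → Prop := fun t => f (q + t • v) = t * s with hSol
  have hchar : ∀ x : Plane, x ∈ H₁ ∩ H₂ →
      Metric.infDist x l₁ = f x → Metric.infDist x l₂ = f x →
      ∃ t : ℝ, x = q + t • v ∧ Sol t := by
    intro x hx hx1 hx2
    rw [hH₁, hH₂] at hx
    obtain ⟨hxH₁, hxH₂⟩ := hx
    rw [hl₁, infDist_hyperplane' n₁ hn₁ c₁ x hxH₁] at hx1
    rw [hl₂, infDist_hyperplane' n₂ hn₂ c₂ x hxH₂] at hx2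
    have hperp : (inner ℝ (x - q) (n₁ - n₂) : ℝ) = 0 := by
      rw [inner_sub_left, inner_sub_right, inner_sub_right, hq₁, hq₂]
      linarith
    obtain ⟨t, ht⟩ := hspan (x - q) hperp
    refine ⟨t, by rw [← ht]; abel, ?_⟩
    have hxq : x = q + t • v := by rw [← ht]; abel
    have hin : (inner ℝ x n₁ : ℝ) = c₁ + t * s := by
      rw [hxq, inner_add_left, real_inner_smul_left, hq₁, ← hs]
    rw [hSol]
    simp only
    rw [← hxq, ← hx1, hin]
    ring
  -- no three solutions
  have hthree : ∀ t₁ t₂ t₃ : ℝ, t₁ < t₂ → t₂ < t₃ → Sol t₁ → Sol t₂ → Sol t₃ → False := by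
    intro t₁ t₂ t₃ h12 h23 hs1 hs2 hs3
    obtain ⟨p, hpS, hpeq⟩ := S.exists_mem_eq_sup' hS (fun q' => dist (q + t₂ • v) q')
    have hdist : ∀ t : ℝ, dist (q + t • v) p ^ 2
        = t^2*‖v‖^2 - 2*t*((inner ℝ p v : ℝ) - (inner ℝ q v : ℝ))
          + (‖p‖^2 - 2*(inner ℝ q p : ℝ) + ‖q‖^2) := by
      intro t
      rw [dist_eq_norm]
      have h1 : q + t • v - p = t • v - (p - q) := by abel
      have e1 : ‖t • v‖^2 = t^2*‖v‖^2 := by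
        rw [norm_smul]
        simp [mul_pow, sq_abs]
      rw [h1, ← real_inner_self_eq_norm_sq]
      simp only [inner_sub_left, inner_sub_right, real_inner_smul_left,
        real_inner_smul_right, real_inner_self_eq_norm_sq]
      rw [e1, real_inner_comm v p, real_inner_comm v q, real_inner_comm p q]
      ring
    obtain ⟨a, ha⟩ : ∃ a : ℝ, a = (inner ℝ p v : ℝ) - (inner ℝ q v : ℝ) := ⟨_, rfl⟩
    obtain ⟨C, hC⟩ : ∃ C : ℝ, C = ‖p‖^2 - 2*(inner ℝ q p : ℝ) + ‖q‖^2 := ⟨_, rfl⟩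
    rw [← ha, ← hC] at hdist
    -- quadratic bounds
    have hQ : ∀ t : ℝ, Sol t → t^2*‖v‖^2 - 2*t*a + C ≤ (t*s)^2 := by
      intro t ht
      have hled : dist (q + t • v) p ≤ t * s := by
        rw [hSol] at ht
        calc dist (q + t • v) p ≤ f (q + t • v) := Finset.le_sup' _ hpS
          _ = t * s := ht
      have h0 : (0:ℝ) ≤ dist (q + t • v) p := dist_nonneg
      nlinarith [hdist t]
    have hQ2 : t₂^2*‖v‖^2 - 2*t₂*a + C = (t₂*s)^2 := by
      have hd2 : dist (q + t₂ • v) p = t₂ * s := by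
        rw [hSol] at hs2
        rw [← hs2]
        exact hpeq.symm
      rw [← hdist t₂, hd2]
    have hg1 := hQ t₁ hs1
    have hg3 := hQ t₃ hs3
    have key : (t₃ - t₂)*((t₁^2*‖v‖^2 - 2*t₁*a + C) - (t₁*s)^2)
        + (t₂ - t₁)*((t₃^2*‖v‖^2 - 2*t₃*a + C) - (t₃*s)^2)
        - (t₃ - t₁)*((t₂^2*‖v‖^2 - 2*t₂*a + C) - (t₂*s)^2)
        = (‖v‖^2 - s^2)*((t₂ - t₁)*((t₃ - t₂)*(t₃ - t₁))) := by ring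
    have hpos : 0 < (‖v‖^2 - s^2)*((t₂ - t₁)*((t₃ - t₂)*(t₃ - t₁))) :=
      mul_pos (sub_pos.mpr hsv) (mul_pos (sub_pos.mpr h12)
        (mul_pos (sub_pos.mpr h23) (sub_pos.mpr (h12.trans h23))))
    have hn1 : (t₃ - t₂)*((t₁^2*‖v‖^2 - 2*t₁*a + C) - (t₁*s)^2) ≤ 0 :=
      mul_nonpos_of_nonneg_of_nonpos (sub_nonneg.mpr h23.le) (sub_nonpos.mpr hg1)
    have hn3 : (t₂ - t₁)*((t₃^2*‖v‖^2 - 2*t₃*a + C) - (t₃*s)^2) ≤ 0 :=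
      mul_nonpos_of_nonneg_of_nonpos (sub_nonneg.mpr h12.le) (sub_nonpos.mpr hg3)
    have hn2 : ((t₂^2*‖v‖^2 - 2*t₂*a + C) - (t₂*s)^2) = 0 := by rw [hQ2]; ring
    rw [hn2] at key
    linarith
  -- injectivity of the parametrization
  have hinj : ∀ t t' : ℝ, q + t • v = q + t' • v → t = t' := by
    intro t t' h
    have h2 : t • v = t' • v := add_left_cancel h
    have h3 : (t - t') • v = 0 := by rw [sub_smul, h2, sub_self]
    rcases smul_eq_zero.mp h3 with h'' | h''
    · linarith [sub_eq_zero.mp h'']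
    · exact absurd h'' hv0
  -- no three distinct solutions, in any order
  have hthree' : ∀ ta tb tc : ℝ, ta ≠ tb → ta ≠ tc → tb ≠ tc →
      Sol ta → Sol tb → Sol tc → False := by
    intro ta tb tc hab hac hbc ha hb hc
    rcases lt_trichotomy ta tb with h1 | h1 | h1
    · rcases lt_trichotomy tb tc with h2 | h2 | h2
      · exact hthree ta tb tc h1 h2 ha hb hc
      · exact hbc h2
      · rcases lt_trichotomy ta tc with h3 | h3 | h3
        · exact hthree ta tc tb h3 h2 ha hc hb
        · exact hac h3
        · exact hthree tc ta tb h3 h1 hc ha hb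
    · exact hab h1
    · rcases lt_trichotomy ta tc with h2 | h2 | h2
      · exact hthree tb ta tc h1 h2 hb ha hc
      · exact hac h2
      · rcases lt_trichotomy tb tc with h3 | h3 | h3
        · exact hthree tb tc ta h3 h2 hb hc ha
        · exact hbc h3
        · exact hthree tc tb ta h3 h1 hc hb ha
  -- final assembly
  by_cases hex : ∃ x : Plane, x ∈ H₁ ∩ H₂ ∧ Metric.infDist x l₁ = f x ∧
      Metric.infDist x l₂ = f x
  · obtain ⟨u, hu⟩ := hex
    by_cases hex2 : ∃ w : Plane, (w ∈ H₁ ∩ H₂ ∧ Metric.infDist w l₁ = f w ∧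
        Metric.infDist w l₂ = f w) ∧ w ≠ u
    · obtain ⟨w, hw, hwu⟩ := hex2
      refine ⟨u, w, ?_⟩
      intro x hx hx1 hx2
      by_contra hcon
      push_neg at hcon
      obtain ⟨hxu, hxw⟩ := hcon
      obtain ⟨tu, htu, hsu⟩ := hchar u hu.1 hu.2.1 hu.2.2
      obtain ⟨tw, htw, hsw⟩ := hchar w hw.1 hw.2.1 hw.2.2
      obtain ⟨tx, htx, hsx⟩ := hchar x hx hx1 hx2
      refine hthree' tu tw tx ?_ ?_ ?_ hsu hsw hsx
      · intro h; exact hwu (by rw [htw, htu, h])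
      · intro h; exact hxu (by rw [htx, htu, h])
      · intro h; exact hxw (by rw [htx, htw, h])
    · refine ⟨u, u, ?_⟩
      intro x hx hx1 hx2
      left
      by_contra hxu
      exact hex2 ⟨x, ⟨hx, hx1, hx2⟩, hxu⟩
  · refine ⟨0, 0, ?_⟩
    intro x hx hx1 hx2
    exact absurd ⟨x, hx, hx1, hx2⟩ hex
end
end
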